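/- Let k ≥ 55 and G ≤ S_k transitive with |G| ≤ 2^{k/2}, ε ∈ (0, 1/2). Suppose Y ⊆ 𝔽₂^k/G satisfies μ(π_G^{-1}(Y)) ≥ 1/2, and suppose that every f : Y → ℓ₁ satisfies the Cheeger/Poincaré inequality ∬_{Y×Y} ‖f(O)−f(O')‖₁ dμ_{𝔽₂^k/G}(O)dμ_{𝔽₂^k/G}(O') ≤ C√(log k) ∬ ‖f(O)−f(O')‖₁ dϑ^{1/(β log k)}_{𝔽₂^k/G}(O,O') for universal constants C, β. Then any f : Y → ℓ₁ satisfying d_{𝔽₂^k/G}(Gx,Gy)^{1−ε} ≤ ‖f(Gx)−f(Gy)‖₁ ≤ α d_{𝔽₂^k/G}(Gx,Gy)^{1−ε} for all orbits in Y must have α ≳ (log k)^{1/2 − ε}. -/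

import Mathlib

open Finset
open scoped ENNReal

instance : Fact ((1 : ℝ≥0∞) ≤ 1) := ⟨le_rfl⟩

/-- The action of a permutation of coordinates on `𝔽₂^k`. -/
def permAct {k : ℕ} (g : Equiv.Perm (Fin k)) (x : Fin k → ZMod 2) : Fin k → ZMod 2 :=
  x ∘ g.symm

/-- The noise measure `ϑ^p` on `𝔽₂^k × 𝔽₂^k`. -/
noncomputable def noiseMeasure {k : ℕ} (p : ℝ) (x y : Fin k → ZMod 2) : ℝ :=
  p ^ hammingDist x y * (1 - p) ^ (k - hammingDist x y) / 2 ^ k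

/-- The quotient distance `d_{𝔽₂^k/G}(Gx,Gy) = min_{g ∈ G} d(gx,y)`. -/
noncomputable def quotDist {k : ℕ} (G : Subgroup (Equiv.Perm (Fin k)))
    (x y : Fin k → ZMod 2) : ℝ :=
  ⨅ g : G, (hammingDist (permAct (g : Equiv.Perm (Fin k)) x) y : ℝ)


/-! Fix `m = ⌊k/16⌋`. The points at quotient distance `< m` from `x` lie in the `|G|` Hamming
balls of radius `m` around the `gx`, whose total size is `≤ |G| (9/8)^k 8^m ≤ 2^k/8` by an
exponential Markov bound; so from every point of `Y` at least `2^k/4` points of `Y` are at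
quotient distance `≥ m`, and the lower Lipschitz bound makes the left side of the Poincaré
inequality `≳ m^{1-ε}`. On the right, `d_{𝔽₂^k/G} ≤ d` and Jensen for the concave `t ↦ t^{1-ε}`
against the binomial distribution bound the noise average of `d^{1-ε}` by
`(k/(β log k))^{1-ε}`. Comparing gives `α ≳ (β/32)^{1-ε} (log k)^{1/2-ε} / C`. When
`β log k < 1` the noise parameter exceeds `1`; there `α ≥ 1` (a far pair exists) suffices. -/

lemma sum_hammingDist_eq_sum_choose {ι M : Type*} [Fintype ι] [DecidableEq ι] [AddCommMonoid M]
    (x : ι → ZMod 2) (F : ℕ → M) :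
    ∑ y, F (hammingDist x y) =
      ∑ j ∈ range (Fintype.card ι + 1), (Fintype.card ι).choose j • F j := by
  let flip : (ι → ZMod 2) ≃ Finset ι :=
    { toFun := fun y => {i | x i ≠ y i}
      invFun := fun s i => if i ∈ s then x i + 1 else x i
      left_inv := fun y => funext fun i => by
        by_cases h : x i = y i <;> simp only [h, ne_eq, mem_filter, mem_univ, true_and,
          not_false_eq_true, not_true_eq_false, if_true, if_false]
        exact (by decide : ∀ a b : ZMod 2, a ≠ b → a + 1 = b) _ _ h
      right_inv := fun s => by ext i; by_cases h : i ∈ s <;> simp [h] }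
  rw [← card_univ, ← sum_powerset_apply_card, powerset_univ]
  exact Fintype.sum_equiv flip _ _ fun _ => rfl

lemma sum_choose_mul_rpow_le (n : ℕ) {p e : ℝ} (hp0 : 0 ≤ p) (hp1 : p ≤ 1)
    (he0 : 0 ≤ e) (he1 : e ≤ 1) :
    ∑ j ∈ range (n + 1), n.choose j * (p ^ j * (1 - p) ^ (n - j)) * (j : ℝ) ^ e ≤ (n * p) ^ e := by
  have hw : ∀ j, (bernsteinPolynomial ℝ n j).eval p = n.choose j * (p ^ j * (1 - p) ^ (n - j)) :=
    fun j => by simp [bernsteinPolynomial, mul_assoc]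
  have hsum : ∑ j ∈ range (n + 1), (n.choose j : ℝ) * (p ^ j * (1 - p) ^ (n - j)) = 1 := by
    simpa [Polynomial.eval_finsetSum, hw] using
      congrArg (Polynomial.eval p) (bernsteinPolynomial.sum ℝ n)
  have hmean : ∑ j ∈ range (n + 1), (n.choose j : ℝ) * (p ^ j * (1 - p) ^ (n - j)) * j = n * p := by
    simpa [Polynomial.eval_finsetSum, hw, mul_comm] using
      congrArg (Polynomial.eval p) (bernsteinPolynomial.sum_smul ℝ n)
  have hnonneg : ∀ j ∈ range (n + 1), 0 ≤ (n.choose j : ℝ) * (p ^ j * (1 - p) ^ (n - j)) :=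
    fun _ _ => mul_nonneg (Nat.cast_nonneg _)
      (mul_nonneg (pow_nonneg hp0 _) (pow_nonneg (sub_nonneg.2 hp1) _))
  simpa [hmean, smul_eq_mul] using (Real.concaveOn_rpow he0 he1).le_map_sum hnonneg hsum
    (p := fun j : ℕ => (j : ℝ)) fun j _ => Set.mem_Ici.2 j.cast_nonneg

lemma sum_noiseMeasure_mul_rpow_le {k : ℕ} {p e : ℝ} (hp0 : 0 ≤ p) (hp1 : p ≤ 1)
    (he0 : 0 ≤ e) (he1 : e ≤ 1) :
    ∑ x : Fin k → ZMod 2, ∑ y, noiseMeasure p x y * (hammingDist x y : ℝ) ^ e ≤ (k * p) ^ e := by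
  have hx : ∀ x : Fin k → ZMod 2, ∑ y, noiseMeasure p x y * (hammingDist x y : ℝ) ^ e =
      (∑ j ∈ range (k + 1), k.choose j * (p ^ j * (1 - p) ^ (k - j)) * (j : ℝ) ^ e) / 2 ^ k := by
    intro x
    have := sum_hammingDist_eq_sum_choose x fun j => p ^ j * (1 - p) ^ (k - j) / 2 ^ k * (j : ℝ) ^ e
    simp only [Fintype.card_fin, nsmul_eq_mul] at this
    rw [sum_div]
    exact this.trans (sum_congr rfl fun j _ => by ring)
  simp only [hx, sum_const, card_univ, Fintype.card_fun, Fintype.card_fin, ZMod.card, nsmul_eq_mul]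
  push_cast
  rw [mul_div_cancel₀ _ (by positivity)]
  exact sum_choose_mul_rpow_le k hp0 hp1 he0 he1

lemma card_hammingDist_lt_mul_pow_le {ι : Type*} [Fintype ι] [DecidableEq ι]
    (z : ι → ZMod 2) (m : ℕ) {t : ℝ} (ht0 : 0 ≤ t) (ht1 : t ≤ 1) :
    #{y | hammingDist z y < m} * t ^ m ≤ (1 + t) ^ Fintype.card ι := by
  calc (#{y | hammingDist z y < m} : ℝ) * t ^ m
      = ∑ y with hammingDist z y < m, t ^ m := by rw [sum_const, nsmul_eq_mul]
    _ ≤ ∑ y with hammingDist z y < m, t ^ hammingDist z y :=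
        sum_le_sum fun y hy => pow_le_pow_of_le_one ht0 ht1 (mem_filter.1 hy).2.le
    _ ≤ ∑ y, t ^ hammingDist z y :=
        sum_le_sum_of_subset_of_nonneg (filter_subset _ _) fun _ _ _ => by positivity
    _ = (1 + t) ^ Fintype.card ι := by
        rw [sum_hammingDist_eq_sum_choose, add_comm 1 t, add_pow]
        simp [nsmul_eq_mul, mul_comm]

section quotDist

variable {k : ℕ} {G : Subgroup (Equiv.Perm (Fin k))} {x y : Fin k → ZMod 2}

lemma quotDist_nonneg : 0 ≤ quotDist G x y :=
  Real.iInf_nonneg fun _ => Nat.cast_nonneg _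

lemma quotDist_le_hammingDist : quotDist G x y ≤ hammingDist x y :=
  ciInf_le ⟨0, by rintro _ ⟨g, rfl⟩; positivity⟩ (1 : G)

lemma exists_hammingDist_lt_of_quotDist_lt {r : ℝ} (h : quotDist G x y < r) :
    ∃ g : G, (hammingDist (permAct (g : Equiv.Perm (Fin k)) x) y : ℝ) < r :=
  exists_lt_of_ciInf_lt h

end quotDist

lemma card_quotDist_lt_mul_pow_le {k : ℕ} (G : Subgroup (Equiv.Perm (Fin k)))
    (x : Fin k → ZMod 2) (m : ℕ) {t : ℝ} (ht0 : 0 ≤ t) (ht1 : t ≤ 1) :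
    #{y | quotDist G x y < m} * t ^ m ≤ Nat.card G * (1 + t) ^ k := by
  have : Fintype G := Fintype.ofFinite G
  have hcover : ({y | quotDist G x y < m} : Finset (Fin k → ZMod 2)) ⊆
      univ.biUnion fun g : G => {y | hammingDist (permAct (g : Equiv.Perm (Fin k)) x) y < m} := by
    intro y hy
    obtain ⟨g, hg⟩ := exists_hammingDist_lt_of_quotDist_lt (mem_filter.1 hy).2
    exact mem_biUnion.2 ⟨g, mem_univ _, mem_filter.2 ⟨mem_univ _, by exact_mod_cast hg⟩⟩
  calc (#{y | quotDist G x y < m} : ℝ) * t ^ m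
      ≤ ∑ g : G, (#{y | hammingDist (permAct (g : Equiv.Perm (Fin k)) x) y < m} : ℝ) * t ^ m := by
        rw [← sum_mul]
        gcongr
        exact_mod_cast (card_le_card hcover).trans card_biUnion_le
    _ ≤ ∑ _g : G, (1 + t) ^ k := sum_le_sum fun g _ => by
        simpa using card_hammingDist_lt_mul_pow_le (permAct (g : Equiv.Perm (Fin k)) x) m ht0 ht1
    _ = Nat.card G * (1 + t) ^ k := by simp [Nat.card_eq_fintype_card]

lemma card_quotDist_lt_le {k m : ℕ} (G : Subgroup (Equiv.Perm (Fin k))) (x : Fin k → ZMod 2)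
    (hk : 24 ≤ k) (hm : 16 * m ≤ k) (hG : (Nat.card G : ℝ) ≤ (2 : ℝ) ^ ((k : ℝ) / 2)) :
    #{y | quotDist G x y < m} ≤ (2 : ℝ) ^ k / 8 := by
  have hG2 : (Nat.card G : ℝ) ^ 2 ≤ 2 ^ k := by
    calc (Nat.card G : ℝ) ^ 2 ≤ ((2 : ℝ) ^ ((k : ℝ) / 2)) ^ 2 := by gcongr
      _ = 2 ^ k := by rw [← Real.rpow_mul_natCast (by norm_num)]; norm_num
  have hpow : Nat.card G * (9 / 8 : ℝ) ^ k * 8 ^ m ≤ 2 ^ k / 8 := by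
    refine (pow_le_pow_iff_left₀ (by positivity) (by positivity) (by norm_num : 16 ≠ 0)).1 ?_
    calc (Nat.card G * (9 / 8 : ℝ) ^ k * 8 ^ m) ^ 16
        = ((Nat.card G : ℝ) ^ 2) ^ 8 * ((9 / 8 : ℝ) ^ 16) ^ k * (8 : ℝ) ^ (16 * m) := by
          simp only [mul_pow, ← pow_mul]; ring_nf
      _ ≤ (2 ^ k) ^ 8 * 8 ^ k * 8 ^ k := by
        gcongr
        · norm_num
        · norm_num
      _ = 2 ^ (14 * k) := by
          rw [show (8 : ℝ) ^ k = 2 ^ (3 * k) by rw [pow_mul]; norm_num, ← pow_mul, ← pow_add,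
            ← pow_add]
          ring_nf
      _ ≤ 2 ^ (16 * k - 48) := pow_le_pow_right₀ (by norm_num) (by omega)
      _ = (2 ^ k / 8) ^ 16 := by
          rw [div_pow, ← pow_mul, pow_sub₀ _ (by norm_num) (by omega)]; norm_num [mul_comm]; ring
  have hball := card_quotDist_lt_mul_pow_le G x m (t := 1 / 8) (by norm_num) (by norm_num)
  calc (#{y | quotDist G x y < m} : ℝ) = #{y | quotDist G x y < m} * (1 / 8) ^ m * 8 ^ m := by
        rw [mul_assoc, ← mul_pow]; norm_num
    _ ≤ Nat.card G * (9 / 8 : ℝ) ^ k * 8 ^ m :=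
        mul_le_mul_of_nonneg_right (hball.trans_eq (by norm_num)) (by positivity)
    _ ≤ 2 ^ k / 8 := hpow

lemma card_mul_mul_rpow_le_sum_sum_norm {X E : Type*} [SeminormedAddCommGroup E]
    {d : X → X → ℝ} {Y : Finset X} {f : X → E} {N r e : ℝ} (hr : 0 ≤ r) (he : 0 ≤ e)
    (hf : ∀ x ∈ Y, ∀ y ∈ Y, d x y ^ e ≤ ‖f x - f y‖)
    (hfar : ∀ x ∈ Y, N ≤ #{y ∈ Y | r ≤ d x y}) :
    #Y * (N * r ^ e) ≤ ∑ x ∈ Y, ∑ y ∈ Y, ‖f x - f y‖ := by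
  rw [← nsmul_eq_mul, ← sum_const]
  refine sum_le_sum fun x hx => ?_
  calc N * r ^ e ≤ #{y ∈ Y | r ≤ d x y} * r ^ e := by gcongr; exact hfar x hx
    _ = ∑ y ∈ Y with r ≤ d x y, r ^ e := by rw [sum_const, nsmul_eq_mul]
    _ ≤ ∑ y ∈ Y with r ≤ d x y, ‖f x - f y‖ := sum_le_sum fun y hy => by
        obtain ⟨hy, hry⟩ := mem_filter.1 hy
        exact (Real.rpow_le_rpow hr hry he).trans (hf x hx y hy)
    _ ≤ ∑ y ∈ Y, ‖f x - f y‖ :=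
        sum_le_sum_of_subset_of_nonneg (filter_subset _ _) fun _ _ _ => norm_nonneg _

lemma noiseMeasure_nonneg {k : ℕ} {p : ℝ} (hp0 : 0 ≤ p) (hp1 : p ≤ 1) (x y : Fin k → ZMod 2) :
    0 ≤ noiseMeasure p x y := by
  have : 0 ≤ 1 - p := by linarith
  unfold noiseMeasure
  positivity

lemma sum_sum_noiseMeasure_mul_norm_le {k : ℕ} {E : Type*} [SeminormedAddCommGroup E]
    {G : Subgroup (Equiv.Perm (Fin k))} {Y : Finset (Fin k → ZMod 2)} {f : (Fin k → ZMod 2) → E}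
    {p e α : ℝ} (hp0 : 0 ≤ p) (hp1 : p ≤ 1) (he0 : 0 ≤ e) (he1 : e ≤ 1) (hα : 0 ≤ α)
    (hf : ∀ x ∈ Y, ∀ y ∈ Y, ‖f x - f y‖ ≤ α * quotDist G x y ^ e) :
    ∑ x ∈ Y, ∑ y ∈ Y, noiseMeasure p x y * ‖f x - f y‖ ≤ α * (k * p) ^ e := by
  have hw := noiseMeasure_nonneg (k := k) hp0 hp1
  calc ∑ x ∈ Y, ∑ y ∈ Y, noiseMeasure p x y * ‖f x - f y‖
      ≤ ∑ x ∈ Y, ∑ y ∈ Y, α * (noiseMeasure p x y * (hammingDist x y : ℝ) ^ e) :=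
        sum_le_sum fun x hx => sum_le_sum fun y hy => by
          calc noiseMeasure p x y * ‖f x - f y‖ ≤ noiseMeasure p x y * (α * quotDist G x y ^ e) :=
                mul_le_mul_of_nonneg_left (hf x hx y hy) (hw x y)
            _ ≤ α * (noiseMeasure p x y * (hammingDist x y : ℝ) ^ e) := by
                rw [mul_left_comm]
                gcongr
                exacts [hw x y, quotDist_nonneg, quotDist_le_hammingDist]
    _ ≤ α * ∑ x, ∑ y, noiseMeasure p x y * (hammingDist x y : ℝ) ^ e := by
        simp only [← mul_sum]
        have hg x y := mul_nonneg (hw x y) (Real.rpow_nonneg (hammingDist x y).cast_nonneg e)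
        gcongr
        exact (sum_le_sum fun x _ => sum_le_univ_sum_of_nonneg (hg x)).trans
          (sum_le_univ_sum_of_nonneg fun x => sum_nonneg fun y _ => hg x y)
    _ ≤ α * (k * p) ^ e := by gcongr; exact sum_noiseMeasure_mul_rpow_le hp0 hp1 he0 he1

lemma min_le_rpow {a e : ℝ} (ha : 0 ≤ a) (he0 : 0 ≤ e) (he1 : e ≤ 1) : min a 1 ≤ a ^ e := by
  rcases le_total a 1 with ha1 | ha1
  · exact (min_le_left a 1).trans
      ((Real.rpow_one a).symm.le.trans (Real.rpow_le_rpow_of_exponent_ge' ha ha1 he0 he1))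
  · exact (min_le_right a 1).trans (Real.one_le_rpow ha1 he0)

section farPairs

variable {k m : ℕ} {G : Subgroup (Equiv.Perm (Fin k))} {Y : Finset (Fin k → ZMod 2)}

lemma two_pow_div_four_le_card_filter_le_quotDist (hk : 24 ≤ k) (hm : 16 * m ≤ k)
    (hG : (Nat.card G : ℝ) ≤ (2 : ℝ) ^ ((k : ℝ) / 2)) (hY : (1 / 2 : ℝ) ≤ #Y / 2 ^ k)
    (x : Fin k → ZMod 2) :
    (2 : ℝ) ^ k / 4 ≤ #{y ∈ Y | (m : ℝ) ≤ quotDist G x y} := by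
  have hsplit := card_filter_add_card_filter_not (s := Y) fun y => (m : ℝ) ≤ quotDist G x y
  have hclose : #{y ∈ Y | ¬(m : ℝ) ≤ quotDist G x y} ≤ #{y | quotDist G x y < m} :=
    card_le_card fun y hy => by simp_all
  have hnear := card_quotDist_lt_le G x hk hm hG
  have hYcard := (le_div_iff₀ (by positivity)).1 hY
  rw [← hsplit] at hYcard
  push_cast at hYcard
  linarith [(Nat.cast_le (α := ℝ)).2 hclose]

lemma one_le_of_norm_sub_le_mul_rpow_quotDist {E : Type*} [SeminormedAddCommGroup E]
    {f : (Fin k → ZMod 2) → E} {α e : ℝ} (hk : 24 ≤ k) (hm : 16 * m ≤ k) (hm1 : 1 ≤ m)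
    (hG : (Nat.card G : ℝ) ≤ (2 : ℝ) ^ ((k : ℝ) / 2)) (hY : (1 / 2 : ℝ) ≤ #Y / 2 ^ k)
    (he : 0 ≤ e) (hf : ∀ x ∈ Y, ∀ y ∈ Y,
      quotDist G x y ^ e ≤ ‖f x - f y‖ ∧ ‖f x - f y‖ ≤ α * quotDist G x y ^ e) :
    1 ≤ α := by
  obtain ⟨x, hx⟩ : Y.Nonempty := card_pos.1 <| Nat.pos_of_ne_zero fun h0 => by
    norm_num [h0] at hY
  obtain ⟨y, hy⟩ : ({y ∈ Y | (m : ℝ) ≤ quotDist G x y} : Finset _).Nonempty :=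
    card_pos.1 <| Nat.cast_pos.1 <|
      (two_pow_div_four_le_card_filter_le_quotDist hk hm hG hY x).trans_lt' (by positivity)
  obtain ⟨hy, hmy⟩ := mem_filter.1 hy
  have : 1 ≤ quotDist G x y ^ e :=
    Real.one_le_rpow ((Nat.one_le_cast.2 hm1).trans hmy) he
  nlinarith [hf x hx y hy]

lemma rpow_div_eight_le_sum_sum_norm {E : Type*} [SeminormedAddCommGroup E]
    {f : (Fin k → ZMod 2) → E} {e : ℝ} (hk : 24 ≤ k) (hm : 16 * m ≤ k)
    (hG : (Nat.card G : ℝ) ≤ (2 : ℝ) ^ ((k : ℝ) / 2)) (hY : (1 / 2 : ℝ) ≤ #Y / 2 ^ k)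
    (he : 0 ≤ e) (hf : ∀ x ∈ Y, ∀ y ∈ Y, quotDist G x y ^ e ≤ ‖f x - f y‖) :
    (m : ℝ) ^ e / 8 ≤ 1 / 4 ^ k * ∑ x ∈ Y, ∑ y ∈ Y, ‖f x - f y‖ := by
  have hYcard : (2 : ℝ) ^ k / 2 ≤ #Y := by linarith [(le_div_iff₀ (by positivity)).1 hY]
  have h4 : (4 : ℝ) ^ k = 2 ^ k * 2 ^ k := by rw [← mul_pow]; norm_num
  calc (m : ℝ) ^ e / 8 = 1 / 4 ^ k * ((2 ^ k / 2) * (2 ^ k / 4 * (m : ℝ) ^ e)) := by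
        rw [h4]; field_simp; ring
    _ ≤ 1 / 4 ^ k * (#Y * (2 ^ k / 4 * (m : ℝ) ^ e)) := by gcongr
    _ ≤ 1 / 4 ^ k * ∑ x ∈ Y, ∑ y ∈ Y, ‖f x - f y‖ := by
        gcongr
        exact card_mul_mul_rpow_le_sum_sum_norm (Nat.cast_nonneg m) he hf
          fun x _ => two_pow_div_four_le_card_filter_le_quotDist hk hm hG hY x

end farPairs

lemma min_div_mul_rpow_le {C β L α ε k m : ℝ} (hC : 0 < C) (hβ : 0 < β) (hL : 0 < L)
    (hk : 0 < k) (hkm : k ≤ 32 * m) (hε0 : 0 ≤ ε) (hε1 : ε ≤ 1)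
    (h : m ^ (1 - ε) / 8 ≤ C * √L * (α * (k * (1 / (β * L))) ^ (1 - ε))) :
    min (β / 32) 1 / (8 * C) * L ^ ((1 : ℝ) / 2 - ε) ≤ α := by
  set K := k * (1 / (β * L)) with hKdef
  have hK : 0 < K := by positivity
  have he0 : 0 ≤ 1 - ε := by linarith
  have hm : K ^ (1 - ε) * ((β / 32) ^ (1 - ε) * L ^ (1 - ε)) ≤ m ^ (1 - ε) := by
    rw [← Real.mul_rpow (by positivity) hL.le, ← Real.mul_rpow hK.le (by positivity)]
    gcongr
    calc K * (β / 32 * L) = k / 32 := by rw [hKdef]; field_simp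
      _ ≤ m := by linarith
  have hLsplit : L ^ (1 - ε) = √L * L ^ ((1 : ℝ) / 2 - ε) := by
    rw [Real.sqrt_eq_rpow, ← Real.rpow_add hL]; ring_nf
  have hcancel : (K ^ (1 - ε) * √L) * ((β / 32) ^ (1 - ε) * L ^ ((1 : ℝ) / 2 - ε)) ≤
      (K ^ (1 - ε) * √L) * (8 * C * α) := by
    rw [hLsplit] at hm
    linarith
  have hmin := min_le_rpow (a := β / 32) (by positivity) he0 (by linarith)
  have := le_of_mul_le_mul_left hcancel (by positivity)
  rw [div_mul_eq_mul_div, div_le_iff₀ (by positivity)]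
  nlinarith [Real.rpow_nonneg hL.le ((1 : ℝ) / 2 - ε)]

lemma sqrt_mul_rpow_le_one {β L ε : ℝ} (hβ : 0 ≤ β) (hL : 1 ≤ L) (hε : 0 ≤ ε) (hβL : β * L ≤ 1) :
    √β * L ^ ((1 : ℝ) / 2 - ε) ≤ 1 :=
  calc √β * L ^ ((1 : ℝ) / 2 - ε) ≤ √β * √L := by
        rw [Real.sqrt_eq_rpow L]
        gcongr
        linarith
    _ = √(β * L) := (Real.sqrt_mul hβ L).symm
    _ ≤ 1 := Real.sqrt_le_one.2 hβL

/-- Deduction of the distortion lower bound `α ≳ (log k)^{1/2-ε}` from the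
Cheeger/Poincaré inequality on a large `G`-invariant subset `Y` of `𝔽₂^k/G`
(stated on the cube via `G`-invariant data). -/
theorem stmt_14 (C β : ℝ) (hC : 0 < C) (hβ : 0 < β) :
    ∃ c : ℝ, 0 < c ∧
      ∀ k : ℕ, 55 ≤ k →
      ∀ G : Subgroup (Equiv.Perm (Fin k)),
        (∀ i j : Fin k, ∃ g ∈ G, g i = j) →
        (Nat.card G : ℝ) ≤ (2 : ℝ) ^ ((k : ℝ) / 2) →
      ∀ ε : ℝ, ε ∈ Set.Ioo (0 : ℝ) (1 / 2) →
      ∀ Y : Finset (Fin k → ZMod 2),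
        (∀ g ∈ G, ∀ x ∈ Y, permAct g x ∈ Y) →
        (1 / 2 : ℝ) ≤ (Y.card : ℝ) / 2 ^ k →
        (∀ f : (Fin k → ZMod 2) → lp (fun _ : ℕ => ℝ) 1,
          (∀ g ∈ G, ∀ x, f (permAct g x) = f x) →
          (1 / (4 : ℝ) ^ k) * (∑ x ∈ Y, ∑ y ∈ Y, ‖f x - f y‖) ≤
            C * Real.sqrt (Real.log k) *
              ∑ x ∈ Y, ∑ y ∈ Y, noiseMeasure (1 / (β * Real.log k)) x y * ‖f x - f y‖) →
      ∀ (α : ℝ) (f : (Fin k → ZMod 2) → lp (fun _ : ℕ => ℝ) 1),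
        (∀ g ∈ G, ∀ x, f (permAct g x) = f x) →
        (∀ x ∈ Y, ∀ y ∈ Y,
          quotDist G x y ^ (1 - ε) ≤ ‖f x - f y‖ ∧
          ‖f x - f y‖ ≤ α * quotDist G x y ^ (1 - ε)) →
        c * Real.log k ^ ((1 : ℝ) / 2 - ε) ≤ α := by
  refine ⟨min (min (β / 32) 1 / (8 * C)) √β, by positivity, ?_⟩
  intro k hk G _ hG ε hε Y _ hY hPoincare α f hfinv hf
  obtain ⟨hε0, hε1⟩ := hε
  set m := k / 16
  have hL : 1 ≤ Real.log k := by
    have : (55 : ℝ) ≤ k := by exact_mod_cast hk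
    rw [Real.le_log_iff_exp_le (by positivity)]
    linarith [Real.exp_one_lt_d9]
  have hα : 1 ≤ α :=
    one_le_of_norm_sub_le_mul_rpow_quotDist (m := m) (by omega) (by omega) (by omega) hG hY
      (by linarith) hf
  rcases le_or_gt (β * Real.log k) 1 with hβL | hβL
  · calc _ ≤ √β * Real.log k ^ ((1 : ℝ) / 2 - ε) := by gcongr; exact min_le_right _ _
      _ ≤ 1 := sqrt_mul_rpow_le_one hβ.le hL hε0.le hβL
      _ ≤ α := hα
  have hnoise := sum_sum_noiseMeasure_mul_norm_le (p := 1 / (β * Real.log k)) (by positivity)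
    ((div_le_one (by positivity)).2 hβL.le) (by linarith) (by linarith) (by linarith)
    fun x hx y hy => (hf x hx y hy).2
  refine (mul_le_mul_of_nonneg_right (min_le_left _ _) (by positivity)).trans
    (min_div_mul_rpow_le (L := Real.log k) (k := k) (m := m) hC hβ (by linarith) (by positivity)
      (by exact_mod_cast (by omega : k ≤ 32 * m)) hε0.le (by linarith) ?_)
  calc (m : ℝ) ^ (1 - ε) / 8 ≤ 1 / 4 ^ k * ∑ x ∈ Y, ∑ y ∈ Y, ‖f x - f y‖ :=
        rpow_div_eight_le_sum_sum_norm (by omega) (by omega) hG hY (by linarith)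
          fun x hx y hy => (hf x hx y hy).1
    _ ≤ _ := hPoincare f hfinv
    _ ≤ _ := by gcongr
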